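/- arXiv:0801.1585 — 6 statements merged into one kernel-verified Lean document; each statement's English description precedes it below -/
import Mathlib

section
/- Consider the polynomial ring ℂ[A₁, A₂, B₁, B₂, C₁, C₂, D₁, D₂], set u := A₁C₂ − A₂C₁ and v := B₁D₂ − B₂D₁, and consider the eight F-term polynomials of phase I of the F₀ quiver gauge theory: C₂·v, C₁·v, A₁·v, A₂·v, B₁·u, B₂·u, D₁·u, D₂·u. Then the vanishing locus in ℂ⁸ of these eight polynomials equals the union V(A₁C₂−A₂C₁, B₁D₂−B₂D₁) ∪ V(A₁, A₂, C₁, C₂) ∪ V(B₁, B₂, D₁, D₂). That is, the master space of phase I of F₀ is the union of its coherent component (a product of two conifolds) with two copies of ℂ⁴. -/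
/-- With `u = A₁C₂ − A₂C₁` and `v = B₁D₂ − B₂D₁`, the master space
of phase I of `F₀` — the vanishing locus in `ℂ⁸` of the eight F-terms
`C₂v, C₁v, A₁v, A₂v, B₁u, B₂u, D₁u, D₂u` of `W = (A₁C₂ − A₂C₁)(B₁D₂ − B₂D₁)` —
equals the union `V(A₁C₂−A₂C₁, B₁D₂−B₂D₁) ∪ V(A₁,A₂,C₁,C₂) ∪ V(B₁,B₂,D₁,D₂)`:
the coherent component (a product of two conifolds) together with two copies
of `ℂ⁴`. -/
theorem master_space_F0_phaseI_decomposition (A₁ A₂ B₁ B₂ C₁ C₂ D₁ D₂ : ℂ) :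
    (C₂ * (B₁ * D₂ - B₂ * D₁) = 0 ∧ C₁ * (B₁ * D₂ - B₂ * D₁) = 0 ∧
      A₁ * (B₁ * D₂ - B₂ * D₁) = 0 ∧ A₂ * (B₁ * D₂ - B₂ * D₁) = 0 ∧
      B₁ * (A₁ * C₂ - A₂ * C₁) = 0 ∧ B₂ * (A₁ * C₂ - A₂ * C₁) = 0 ∧
      D₁ * (A₁ * C₂ - A₂ * C₁) = 0 ∧ D₂ * (A₁ * C₂ - A₂ * C₁) = 0) ↔
    ((A₁ * C₂ - A₂ * C₁ = 0 ∧ B₁ * D₂ - B₂ * D₁ = 0) ∨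
      (A₁ = 0 ∧ A₂ = 0 ∧ C₁ = 0 ∧ C₂ = 0) ∨
      (B₁ = 0 ∧ B₂ = 0 ∧ D₁ = 0 ∧ D₂ = 0)) := by
  constructor
  · rintro ⟨h1, h2, h3, h4, h5, h6, h7, h8⟩
    by_cases hu : A₁ * C₂ - A₂ * C₁ = 0
    · by_cases hv : B₁ * D₂ - B₂ * D₁ = 0
      · exact Or.inl ⟨hu, hv⟩
      · exact Or.inr (Or.inl ⟨(mul_eq_zero.mp h3).resolve_right hv,
          (mul_eq_zero.mp h4).resolve_right hv, (mul_eq_zero.mp h2).resolve_right hv,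
          (mul_eq_zero.mp h1).resolve_right hv⟩)
    · exact Or.inr (Or.inr ⟨(mul_eq_zero.mp h5).resolve_right hu,
        (mul_eq_zero.mp h6).resolve_right hu, (mul_eq_zero.mp h7).resolve_right hu,
        (mul_eq_zero.mp h8).resolve_right hu⟩)
  · rintro (⟨hu, hv⟩ | ⟨a1, a2, c1, c2⟩ | ⟨b1, b2, d1, d2⟩) <;> simp_all
end

section
/- Consider the polynomial ring ℂ[X₁₁, X₁₂, X₂₁, X₁₃, X₃₁, X₂₃, X₃₂] and the seven F-term polynomials of the suspended pinched point (SPP) quiver gauge theory: X₁₂X₂₁ − X₁₃X₃₁, X₂₁(X₁₁ − X₂₃X₃₂), X₁₂(X₁₁ − X₂₃X₃₂), X₃₁(X₃₂X₂₃ − X₁₁), X₁₃(X₃₂X₂₃ − X₁₁), X₂₃(X₃₁X₁₃ − X₂₁X₁₂), X₃₂(X₃₁X₁₃ − X₂₁X₁₂). Then the vanishing locus in ℂ⁷ of these seven polynomials equals the union V(X₂₃X₃₂ − X₁₁, X₂₁X₁₂ − X₃₁X₁₃) ∪ V(X₁₃, X₃₁, X₁₂, X₂₁). That is, the master space of SPP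 is the union of its coherent component (the product of a conifold with ℂ²) and a linear component ℂ³. -/
/-- The master space of the suspended pinched point (SPP) — the
vanishing locus in `ℂ⁷` of the seven F-terms
`X₁₂X₂₁ − X₁₃X₃₁`, `X₂₁(X₁₁ − X₂₃X₃₂)`, `X₁₂(X₁₁ − X₂₃X₃₂)`, `X₃₁(X₃₂X₂₃ − X₁₁)`,
`X₁₃(X₃₂X₂₃ − X₁₁)`, `X₂₃(X₃₁X₁₃ − X₂₁X₁₂)`, `X₃₂(X₃₁X₁₃ − X₂₁X₁₂)` of
`W = X₁₁(X₁₂X₂₁ − X₁₃X₃₁) + X₃₁X₁₃X₃₂X₂₃ − X₂₁X₁₂X₂₃X₃₂` — equals the union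
`V(X₂₃X₃₂ − X₁₁, X₂₁X₁₂ − X₃₁X₁₃) ∪ V(X₁₃, X₃₁, X₁₂, X₂₁)`: the coherent
component (conifold × ℂ²) and a linear component `ℂ³`. -/
theorem master_space_SPP_decomposition (X₁₁ X₁₂ X₂₁ X₁₃ X₃₁ X₂₃ X₃₂ : ℂ) :
    (X₁₂ * X₂₁ - X₁₃ * X₃₁ = 0 ∧
      X₂₁ * (X₁₁ - X₂₃ * X₃₂) = 0 ∧ X₁₂ * (X₁₁ - X₂₃ * X₃₂) = 0 ∧
      X₃₁ * (X₃₂ * X₂₃ - X₁₁) = 0 ∧ X₁₃ * (X₃₂ * X₂₃ - X₁₁) = 0 ∧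
      X₂₃ * (X₃₁ * X₁₃ - X₂₁ * X₁₂) = 0 ∧ X₃₂ * (X₃₁ * X₁₃ - X₂₁ * X₁₂) = 0) ↔
    ((X₂₃ * X₃₂ - X₁₁ = 0 ∧ X₂₁ * X₁₂ - X₃₁ * X₁₃ = 0) ∨
      (X₁₃ = 0 ∧ X₃₁ = 0 ∧ X₁₂ = 0 ∧ X₂₁ = 0)) := by
  constructor
  · rintro ⟨h1, h2, h3, h4, h5, h6, h7⟩
    by_cases h : X₁₁ - X₂₃ * X₃₂ = 0
    · left
      exact ⟨by linear_combination -h, by linear_combination h1⟩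
    · right
      have h' : X₃₂ * X₂₃ - X₁₁ ≠ 0 := fun hc => h (by linear_combination -hc)
      exact ⟨(mul_eq_zero.mp h5).resolve_right h',
             (mul_eq_zero.mp h4).resolve_right h',
             (mul_eq_zero.mp h3).resolve_right h,
             (mul_eq_zero.mp h2).resolve_right h⟩
  · rintro (⟨h1, h2⟩ | ⟨h1, h2, h3, h4⟩)
    · refine ⟨by linear_combination h2, by linear_combination -X₂₁ * h1,
        by linear_combination -X₁₂ * h1, by linear_combination X₃₁ * h1,
        by linear_combination X₁₃ * h1, by linear_combination -X₂₃ * h2,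
        by linear_combination -X₃₂ * h2⟩
    · subst h1 h2 h3 h4; norm_num
end

section
/- Consider the polynomial ring ℂ[U₁, U₂, Ũ₁, Ũ₂, V₁, V₂, Y₁, Y₂, Y₃, Z] and the ten F-term polynomials of the dP₁ quiver gauge theory: V₁Ũ₂ − V₂Ũ₁, U₁V₂ − U₂V₁, Z(Ũ₁U₂ − Ũ₂U₁), Y₂(Ũ₁U₂ − Ũ₂U₁), Y₁Ũ₂ − Y₃U₂, Y₁Ũ₁ − Y₃U₁, Y₁V₂ − Y₂ZU₂, Y₁V₁ − Y₂ZU₁, Y₃V₂ − Y₂ZŨ₂, Y₃V₁ − Y₂ZŨ₁. Then the vanishing locus in ℂ¹⁰ of these ten polynomials equals the union V(Ũ₂Y₁ − U₂Y₃, Ũ₁Y₁ − U₁Y₃, Ũ₂V₁ − Ũ₁V₂, U₂V₁ − U₁V₂, U₂Ũ₁ − U₁Ũ₂, Ũ₂Y₂Z − V₂Y₃, Ũ₁Y₂Z − V₁Y₃, U₂Y₂Z − V₂Y₁, U₁Y₂Z − V₁Y₁) ∪ V(Z, Y₃, Y₂, Y₁, V₂, V₁). That is, the master space of dP₁ is the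 union of its six-dimensional coherent component and a linear component ℂ⁴ parametrized by U₁, U₂, Ũ₁, Ũ₂. -/
/-- The master space of `dP₁` — the vanishing locus in `ℂ¹⁰` of the
ten F-terms of `W = Y₁(V₁Ũ₂ − V₂Ũ₁) + Y₃(U₁V₂ − U₂V₁) + Y₂Z(Ũ₁U₂ − Ũ₂U₁)` — equals
the union of its six-dimensional coherent component (cut out by the nine listed
binomials) and the linear component `V(Z, Y₃, Y₂, Y₁, V₂, V₁) = ℂ⁴` parametrized
by `U₁, U₂, Ũ₁, Ũ₂`.  (`Ut₁, Ut₂` denote `Ũ₁, Ũ₂`.) -/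
theorem master_space_dP1_decomposition (U₁ U₂ Ut₁ Ut₂ V₁ V₂ Y₁ Y₂ Y₃ Z : ℂ) :
    (V₁ * Ut₂ - V₂ * Ut₁ = 0 ∧
      U₁ * V₂ - U₂ * V₁ = 0 ∧
      Z * (Ut₁ * U₂ - Ut₂ * U₁) = 0 ∧
      Y₂ * (Ut₁ * U₂ - Ut₂ * U₁) = 0 ∧
      Y₁ * Ut₂ - Y₃ * U₂ = 0 ∧
      Y₁ * Ut₁ - Y₃ * U₁ = 0 ∧
      Y₁ * V₂ - Y₂ * Z * U₂ = 0 ∧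
      Y₁ * V₁ - Y₂ * Z * U₁ = 0 ∧
      Y₃ * V₂ - Y₂ * Z * Ut₂ = 0 ∧
      Y₃ * V₁ - Y₂ * Z * Ut₁ = 0) ↔
    ((Ut₂ * Y₁ - U₂ * Y₃ = 0 ∧
        Ut₁ * Y₁ - U₁ * Y₃ = 0 ∧
        Ut₂ * V₁ - Ut₁ * V₂ = 0 ∧
        U₂ * V₁ - U₁ * V₂ = 0 ∧
        U₂ * Ut₁ - U₁ * Ut₂ = 0 ∧
        Ut₂ * Y₂ * Z - V₂ * Y₃ = 0 ∧
        Ut₁ * Y₂ * Z - V₁ * Y₃ = 0 ∧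
        U₂ * Y₂ * Z - V₂ * Y₁ = 0 ∧
        U₁ * Y₂ * Z - V₁ * Y₁ = 0) ∨
      (Z = 0 ∧ Y₃ = 0 ∧ Y₂ = 0 ∧ Y₁ = 0 ∧ V₂ = 0 ∧ V₁ = 0)) := by
  constructor
  · rintro ⟨h1, h2, h3, h4, h5, h6, h7, h8, h9, h10⟩
    by_cases hD : Ut₁ * U₂ - Ut₂ * U₁ = 0
    · left
      refine ⟨?_, ?_, ?_, ?_, ?_, ?_, ?_, ?_, ?_⟩
      · linear_combination h5
      · linear_combination h6
      · linear_combination h1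
      · linear_combination -h2
      · linear_combination hD
      · linear_combination -h9
      · linear_combination -h10
      · linear_combination -h7
      · linear_combination -h8
    · right
      have hZ : Z = 0 := by
        rcases mul_eq_zero.mp h3 with h | h
        · exact h
        · exact absurd h hD
      have hY2 : Y₂ = 0 := by
        rcases mul_eq_zero.mp h4 with h | h
        · exact h
        · exact absurd h hD
      have key : ∀ a : ℂ, a * (Ut₁ * U₂ - Ut₂ * U₁) = 0 → a = 0 := by
        intro a ha
        rcases mul_eq_zero.mp ha with h | h
        · exact h
        · exact absurd h hD
      have hY1 : Y₁ = 0 := key Y₁ (by linear_combination U₂ * h6 - U₁ * h5)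
      have hY3 : Y₃ = 0 := key Y₃ (by linear_combination Ut₂ * h6 - Ut₁ * h5)
      have hV1 : V₁ = 0 := key V₁ (by linear_combination -Ut₁ * h2 - U₁ * h1)
      have hV2 : V₂ = 0 := key V₂ (by linear_combination -Ut₂ * h2 - U₂ * h1)
      exact ⟨hZ, hY3, hY2, hY1, hV2, hV1⟩
  · rintro (⟨g1, g2, g3, g4, g5, g6, g7, g8, g9⟩ | ⟨hZ, hY3, hY2, hY1, hV2, hV1⟩)
    · refine ⟨?_, ?_, ?_, ?_, ?_, ?_, ?_, ?_, ?_, ?_⟩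
      · linear_combination g3
      · linear_combination -g4
      · linear_combination Z * g5
      · linear_combination Y₂ * g5
      · linear_combination g1
      · linear_combination g2
      · linear_combination -g8
      · linear_combination -g9
      · linear_combination -g6
      · linear_combination -g7
    · subst hZ hY3 hY2 hY1 hV2 hV1
      refine ⟨by ring, by ring, by ring, by ring, by ring, by ring, by ring, by ring, by ring, by ring⟩
end

section
/- Let V ⊆ ℂ⁹ = ℂ³ × ℂ³ × ℂ³ be the common vanishing locus of the nine quadrics x_a y_b − x_b y_a, y_a z_b − y_b z_a, x_a z_b − x_b z_a (for 1 ≤ a < b ≤ 3), i.e. the set of triples (x, y, z) of vectors in ℂ³ that are pairwise proportional (all pairwise 2×2 minors vanish). Then V is an irreducible closed subset of ℂ⁹ in the Zariski topology; indeed V is the Zariski closure of the image of the map ℂ³ × ℂ × ℂ → ℂ⁹ sending (v, s, t) to (v, s·v, t·v). (This is the statement that the master space of dP₀ = ℂ³/ℤ₃ is irreducible.) -/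
open MvPolynomial

/-- A subset of `ℂ⁹` (points indexed by `Fin 3 × Fin 3`, i.e. triples of vectors in
`ℂ³`) is Zariski closed if it is the common vanishing locus of a set of
polynomials. -/
def ZariskiClosed (Z : Set (Fin 3 × Fin 3 → ℂ)) : Prop :=
  ∃ T : Set (MvPolynomial (Fin 3 × Fin 3) ℂ),
    Z = {x | ∀ p ∈ T, MvPolynomial.eval x p = 0}

/-- The master space of `dP₀ = ℂ³/ℤ₃`: the common vanishing locus in `ℂ⁹` of the
nine quadrics `x_a y_b − x_b y_a`, `y_a z_b − y_b z_a`, `x_a z_b − x_b z_a`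
(`1 ≤ a < b ≤ 3`), where `x = w(0,·)`, `y = w(1,·)`, `z = w(2,·)`; i.e. the set of
triples `(x,y,z)` of vectors of `ℂ³` that are pairwise proportional. -/
def masterSpaceDP0 : Set (Fin 3 × Fin 3 → ℂ) :=
  {w | ∀ a b : Fin 3, a < b →
    (w (0, a) * w (1, b) - w (0, b) * w (1, a) = 0 ∧
      w (1, a) * w (2, b) - w (1, b) * w (2, a) = 0 ∧
      w (0, a) * w (2, b) - w (0, b) * w (2, a) = 0)}

/-- The parametrization `ℂ³ × ℂ × ℂ → ℂ⁹`, `(v, s, t) ↦ (v, s·v, t·v)`. -/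
def dP0Param : (Fin 3 → ℂ) × ℂ × ℂ → (Fin 3 × Fin 3 → ℂ) :=
  fun vst q => ![vst.1 q.2, vst.2.1 * vst.1 q.2, vst.2.2 * vst.1 q.2] q.1

/-! The quadrics cut out the master space, so it is closed. A pairwise proportional triple
`(x, y, z)` with `x ≠ 0` is `(x, s x, t x)`, a point of the image; one with `x = 0` is
`(0, s v, t v)`, the value at `ε = 0` of the line `ε ↦ (ε v, s v, t v)`, whose points with
`ε ≠ 0` lie in the image. A polynomial vanishing on a punctured line vanishes on all of it, so
the master space is the Zariski closure of the image. It is irreducible because the image of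
affine space under a polynomial map is: `ℂ[t₁, …, t₅]` is a domain and its elements are
determined by their values. -/

section AlgebraicSet

variable {σ τ K : Type*} [Field K]

/-- `ZariskiClosed` is this notion for `σ = Fin 3 × Fin 3` and `K = ℂ`, definitionally. -/
def IsAlgebraicSet (Z : Set (σ → K)) : Prop :=
  ∃ T : Set (MvPolynomial σ K), Z = {x | ∀ p ∈ T, eval x p = 0}

theorem IsAlgebraicSet.preimage_eval {Z : Set (σ → K)} (hZ : IsAlgebraicSet Z)
    (Φ : σ → MvPolynomial τ K) : IsAlgebraicSet ((fun u i => eval u (Φ i)) ⁻¹' Z) := by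
  obtain ⟨T, rfl⟩ := hZ
  refine ⟨bind₁ Φ '' T, ?_⟩
  ext u
  have heval (p : MvPolynomial σ K) : eval u (bind₁ Φ p) = eval (fun i => eval u (Φ i)) p :=
    eval₂Hom_bind₁ _ _ _ _
  simp [heval]

theorem IsAlgebraicSet.eq_univ_or_eq_univ [Infinite K] {Z₁ Z₂ : Set (σ → K)}
    (h₁ : IsAlgebraicSet Z₁) (h₂ : IsAlgebraicSet Z₂) (h : Z₁ ∪ Z₂ = Set.univ) :
    Z₁ = Set.univ ∨ Z₂ = Set.univ := by
  obtain ⟨T₁, rfl⟩ := h₁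
  obtain ⟨T₂, rfl⟩ := h₂
  by_contra! hne
  obtain ⟨_, p₁, hp₁, hx₁⟩ : ∃ x, ∃ p ∈ T₁, eval x p ≠ 0 := by
    simpa [Set.eq_univ_iff_forall] using hne.1
  obtain ⟨_, p₂, hp₂, hx₂⟩ : ∃ x, ∃ p ∈ T₂, eval x p ≠ 0 := by
    simpa [Set.eq_univ_iff_forall] using hne.2
  have hprod : p₁ * p₂ ≠ 0 :=
    mul_ne_zero (by rintro rfl; simp at hx₁) (by rintro rfl; simp at hx₂)
  obtain ⟨x, hx⟩ : ∃ x, eval x (p₁ * p₂) ≠ 0 := by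
    by_contra! h0
    exact hprod (MvPolynomial.funext (by simpa using h0))
  rw [map_mul, mul_ne_zero_iff] at hx
  rcases h.superset (Set.mem_univ x) with hx' | hx'
  exacts [hx.1 (hx' p₁ hp₁), hx.2 (hx' p₂ hp₂)]

theorem IsAlgebraicSet.range_eval_subset_or [Infinite K] {Z₁ Z₂ : Set (σ → K)}
    (h₁ : IsAlgebraicSet Z₁) (h₂ : IsAlgebraicSet Z₂) (Φ : σ → MvPolynomial τ K)
    (h : Set.range (fun u i => eval u (Φ i)) ⊆ Z₁ ∪ Z₂) :
    Set.range (fun u i => eval u (Φ i)) ⊆ Z₁ ∨ Set.range (fun u i => eval u (Φ i)) ⊆ Z₂ := by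
  simp only [← Set.preimage_eq_univ_iff, Set.preimage_union] at h ⊢
  exact (h₁.preimage_eval Φ).eq_univ_or_eq_univ (h₂.preimage_eval Φ) h

theorem IsAlgebraicSet.mem_of_add_smul_mem [Infinite K] {Z : Set (σ → K)}
    (hZ : IsAlgebraicSet Z) {A B : σ → K} (h : ∀ ε : K, ε ≠ 0 → A + ε • B ∈ Z) : A ∈ Z := by
  let line : σ → MvPolynomial Unit K := fun i => C (A i) + X () * C (B i)
  have hline (u : Unit → K) : (fun i => eval u (line i)) = A + u () • B := by
    ext i; simp [line]
  -- the affine line `Unit → K` is covered by the preimage of `Z` and the point `0`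
  have hcover : (fun u i => eval u (line i)) ⁻¹' Z ∪ {u | u () = 0} = Set.univ := by
    refine Set.eq_univ_of_forall fun u => ?_
    by_cases hu : u () = 0
    · exact Or.inr hu
    · exact Or.inl (by simpa [hline] using h _ hu)
  have hzero : IsAlgebraicSet {u : Unit → K | u () = 0} := ⟨{X ()}, by simp⟩
  rcases (hZ.preimage_eval line).eq_univ_or_eq_univ hzero hcover with hZ' | hzero'
  · have h0 := hZ'.superset (Set.mem_univ (0 : Unit → K))
    rwa [Set.mem_preimage, hline, Pi.zero_apply, zero_smul, add_zero] at h0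
  · simpa using hzero'.superset (Set.mem_univ 1)

end AlgebraicSet

theorem mul_eq_mul_of_forall_lt {ι R : Type*} [LinearOrder ι] [CommRing R] {x y : ι → R}
    (h : ∀ a b, a < b → x a * y b - x b * y a = 0) (a b : ι) : x a * y b = x b * y a := by
  rcases lt_trichotomy a b with hab | rfl | hab
  · linear_combination h a b hab
  · rfl
  · linear_combination -h b a hab

section Proportional

variable {ι K : Type*} [Field K]

theorem exists_eq_smul_of_mul_eq_mul {x y : ι → K} (hx : x ≠ 0)
    (h : ∀ a b, x a * y b = x b * y a) : ∃ s : K, y = s • x := by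
  obtain ⟨k, hk⟩ : ∃ k, x k ≠ 0 := Function.ne_iff.mp hx
  refine ⟨y k / x k, funext fun a => ?_⟩
  simp only [Pi.smul_apply, smul_eq_mul]
  field_simp
  linear_combination -h a k

theorem exists_eq_smul_and_eq_smul {y z : ι → K} (h : ∀ a b, y a * z b = y b * z a) :
    ∃ v : ι → K, ∃ s t : K, y = s • v ∧ z = t • v := by
  by_cases hy : y = 0
  · exact ⟨z, 0, 1, by simp [hy], by simp⟩
  · obtain ⟨t, hz⟩ := exists_eq_smul_of_mul_eq_mul hy h
    exact ⟨y, 1, t, by simp, hz⟩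

end Proportional

theorem exists_eq_uncurry (w : Fin 3 × Fin 3 → ℂ) :
    ∃ x y z : Fin 3 → ℂ, w = Function.uncurry ![x, y, z] :=
  ⟨fun a => w (0, a), fun a => w (1, a), fun a => w (2, a), by ext ⟨i, a⟩; fin_cases i <;> rfl⟩

theorem dP0Param_eq (v : Fin 3 → ℂ) (s t : ℂ) :
    dP0Param (v, s, t) = Function.uncurry ![v, s • v, t • v] := by
  ext ⟨i, a⟩; fin_cases i <;> rfl

theorem mul_eq_mul_of_uncurry_mem_masterSpaceDP0 {x y z : Fin 3 → ℂ}
    (hw : Function.uncurry ![x, y, z] ∈ masterSpaceDP0) :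
    (∀ a b, x a * y b = x b * y a) ∧ (∀ a b, y a * z b = y b * z a) ∧
      ∀ a b, x a * z b = x b * z a :=
  ⟨mul_eq_mul_of_forall_lt fun a b hab => (hw a b hab).1,
    mul_eq_mul_of_forall_lt fun a b hab => (hw a b hab).2.1,
    mul_eq_mul_of_forall_lt fun a b hab => (hw a b hab).2.2⟩

theorem zariskiClosed_masterSpaceDP0 : ZariskiClosed masterSpaceDP0 := by
  refine ⟨⋃ (a) (b) (_ : a < b),
    {X (0, a) * X (1, b) - X (0, b) * X (1, a), X (1, a) * X (2, b) - X (1, b) * X (2, a),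
      X (0, a) * X (2, b) - X (0, b) * X (2, a)}, Set.ext fun w => ?_⟩
  change _ ↔ _ ⊆ {p | eval w p = 0}
  simp [masterSpaceDP0, Set.insert_subset_iff]

theorem range_dP0Param_subset : Set.range dP0Param ⊆ masterSpaceDP0 := by
  rintro _ ⟨⟨v, s, t⟩, rfl⟩ a b -
  refine ⟨?_, ?_, ?_⟩ <;> simp [dP0Param] <;> ring

theorem masterSpaceDP0_subset_of_range_subset {Z : Set (Fin 3 × Fin 3 → ℂ)}
    (hZ : ZariskiClosed Z) (hr : Set.range dP0Param ⊆ Z) : masterSpaceDP0 ⊆ Z := by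
  intro w hw
  obtain ⟨x, y, z, rfl⟩ := exists_eq_uncurry w
  obtain ⟨hxy, hyz, hxz⟩ := mul_eq_mul_of_uncurry_mem_masterSpaceDP0 hw
  by_cases hx : x = 0
  · obtain ⟨v, s, t, rfl, rfl⟩ := exists_eq_smul_and_eq_smul hyz
    refine IsAlgebraicSet.mem_of_add_smul_mem hZ (B := Function.uncurry ![v, 0, 0])
      fun ε hε => hr ⟨(ε • v, s * ε⁻¹, t * ε⁻¹), ?_⟩
    rw [dP0Param_eq, hx]
    ext ⟨i, a⟩; fin_cases i <;> simp [smul_smul, inv_mul_cancel_right₀ hε]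
  · obtain ⟨s, rfl⟩ := exists_eq_smul_of_mul_eq_mul hx hxy
    obtain ⟨t, rfl⟩ := exists_eq_smul_of_mul_eq_mul hx hxz
    exact hr ⟨(x, s, t), dP0Param_eq x s t⟩

noncomputable def dP0ParamPoly (i : Fin 3 × Fin 3) : MvPolynomial (Fin 3 ⊕ Fin 2) ℂ :=
  ![X (Sum.inl i.2), X (Sum.inr 0) * X (Sum.inl i.2), X (Sum.inr 1) * X (Sum.inl i.2)] i.1

theorem range_dP0Param_eq_range_eval :
    Set.range dP0Param = Set.range (fun u i => eval u (dP0ParamPoly i)) := by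
  have hdecode : Function.Surjective fun u : Fin 3 ⊕ Fin 2 → ℂ =>
      ((fun a => u (Sum.inl a)), u (Sum.inr 0), u (Sum.inr 1)) :=
    fun ⟨v, s, t⟩ => ⟨Sum.elim v ![s, t], rfl⟩
  rw [← hdecode.range_comp]
  congr 1
  ext u ⟨i, a⟩
  fin_cases i <;> simp [dP0Param, dP0ParamPoly]

theorem range_dP0Param_subset_or {Z₁ Z₂ : Set (Fin 3 × Fin 3 → ℂ)} (h₁ : ZariskiClosed Z₁)
    (h₂ : ZariskiClosed Z₂) (h : Set.range dP0Param ⊆ Z₁ ∪ Z₂) :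
    Set.range dP0Param ⊆ Z₁ ∨ Set.range dP0Param ⊆ Z₂ := by
  rw [range_dP0Param_eq_range_eval] at h ⊢
  exact IsAlgebraicSet.range_eval_subset_or h₁ h₂ dP0ParamPoly h

/-- The master space of `dP₀ = ℂ³/ℤ₃` is an irreducible closed
subset of `ℂ⁹` in the Zariski topology (it is nonempty and cannot be covered by two
Zariski-closed sets without being contained in one of them), and it is the Zariski
closure of the image of `(v,s,t) ↦ (v, s·v, t·v)`, i.e. the intersection of all
Zariski-closed sets containing that image. -/
theorem masterSpaceDP0_irreducible :
    ZariskiClosed masterSpaceDP0 ∧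
    masterSpaceDP0.Nonempty ∧
    (∀ Z₁ Z₂ : Set (Fin 3 × Fin 3 → ℂ), ZariskiClosed Z₁ → ZariskiClosed Z₂ →
      masterSpaceDP0 ⊆ Z₁ ∪ Z₂ → masterSpaceDP0 ⊆ Z₁ ∨ masterSpaceDP0 ⊆ Z₂) ∧
    masterSpaceDP0 = ⋂₀ {Z | ZariskiClosed Z ∧ Set.range dP0Param ⊆ Z} := by
  refine ⟨zariskiClosed_masterSpaceDP0, ⟨0, by simp [masterSpaceDP0]⟩, ?_, ?_⟩
  · intro Z₁ Z₂ h₁ h₂ h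
    exact (range_dP0Param_subset_or h₁ h₂ (range_dP0Param_subset.trans h)).imp
      (masterSpaceDP0_subset_of_range_subset h₁) (masterSpaceDP0_subset_of_range_subset h₂)
  · refine (Set.subset_sInter fun Z hZ => ?_).antisymm ?_
    · exact masterSpaceDP0_subset_of_range_subset hZ.1 hZ.2
    · exact Set.sInter_subset_of_mem ⟨zariskiClosed_masterSpaceDP0, range_dP0Param_subset⟩
end

section
/- Let t ∈ ℂ and r ∈ ℝ satisfy |t| < r < 1. Then the contour integral over the circle of radius r centered at 0 satisfies (1/(2πi)) ∮_{|z|=r} z² / ((z − t)³ (1 − z)³) dz = (1 + 4t + t²)/(1 − t)⁵. (This is the Molien-formula computation of the Hilbert series of the master space of dP₀: the integrand is (z(1 − t/z)³(1 − z)³)⁻¹, the only pole inside the contour is the triple pole at z = t, and the residue evaluates to (1+4t+t²)/(1−t)⁵.) -/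
/-!
The integrand is rational, with poles only at `t` and `1`, and it vanishes at infinity, so it is
the sum of its principal parts there. The disc `|z| ≤ r` contains `t` but not `1`: the principal
part at `1` is holomorphic on it and integrates to zero, and of the principal part at `t` only the
simple-pole term survives, leaving `2πi` times the residue `(1 + 4t + t²)/(1 - t)⁵`.
-/

open Real Metric Complex

noncomputable def principalPart {n : ℕ} (a : Fin n → ℂ) (w z : ℂ) : ℂ :=
  ∑ k, a k / (z - w) ^ ((k : ℕ) + 1)

section

variable {n : ℕ} (a : Fin n → ℂ) {c w : ℂ} {R : ℝ}

theorem differentiableAt_principalPart {z : ℂ} (hz : z ≠ w) :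
    DifferentiableAt ℂ (principalPart a w) z := by
  have : z - w ≠ 0 := sub_ne_zero.mpr hz
  unfold principalPart
  fun_prop (disch := exact pow_ne_zero _ this)

theorem circleIntegrable_principalPart (hR : 0 ≤ R) (hw : w ∉ sphere c R) :
    CircleIntegrable (principalPart a w) c R :=
  ContinuousOn.circleIntegrable hR fun _ hz ↦
    (differentiableAt_principalPart a (ne_of_mem_of_not_mem hz hw)).continuousAt.continuousWithinAt

theorem circleIntegral_principalPart_of_notMem_closedBall (hR : 0 ≤ R)
    (hw : w ∉ closedBall c R) :
    ∮ z in C(c, R), principalPart a w z = 0 :=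
  DiffContOnCl.circleIntegral_eq_zero hR <|
    DifferentiableOn.diffContOnCl fun _ hz ↦
      (differentiableAt_principalPart a
        (ne_of_mem_of_not_mem (closure_ball_subset_closedBall hz) hw)).differentiableWithinAt

theorem circleIntegral_principalPart_of_mem_ball (a : Fin (n + 1) → ℂ) (hw : w ∈ ball c R) :
    ∮ z in C(c, R), principalPart a w z = 2 * π * I * a 0 := by
  have hw' : w ∉ sphere c |R| := by
    rw [abs_of_pos (dist_nonneg.trans_lt hw)]
    exact fun h ↦ (mem_sphere.mp h ▸ mem_ball.mp hw).false
  have hterm (k : ℕ) (b : ℂ) : ∮ z in C(c, R), b / (z - w) ^ (k + 1) =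
      b * ∮ z in C(c, R), (z - w) ^ (-(k + 1 : ℤ)) := by
    rw [← circleIntegral.integral_const_mul]
    simp only [zpow_neg, div_eq_mul_inv]
    norm_cast
  unfold principalPart
  rw [circleIntegral.integral_fun_sum fun k _ ↦ ?_, Fin.sum_univ_succ,
    Finset.sum_eq_zero fun k _ ↦ ?_]
  · rw [hterm]; simp [circleIntegral.integral_sub_inv_of_mem_ball hw, mul_comm]
  · rw [hterm, circleIntegral.integral_sub_zpow_of_ne (by simp [Fin.val_succ]; omega), mul_zero]
  · exact (continuousOn_const.div (by fun_prop) fun z hz ↦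
      pow_ne_zero _ (sub_ne_zero.mpr (ne_of_mem_of_not_mem hz hw'))).circleIntegrable'

end

theorem molien_dP0_integrand_eq_principalPart_add {t z : ℂ} (ht : t ≠ 1) (hzt : z ≠ t)
    (hz : z ≠ 1) :
    z ^ 2 / ((z - t) ^ 3 * (1 - z) ^ 3) =
      principalPart ![(1 + 4 * t + t ^ 2) / (1 - t) ^ 5, (2 * t + t ^ 2) / (1 - t) ^ 4,
          t ^ 2 / (1 - t) ^ 3] t z +
        principalPart ![-(1 + 4 * t + t ^ 2) / (1 - t) ^ 5, (1 + 2 * t) / (1 - t) ^ 4,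
          -1 / (1 - t) ^ 3] 1 z := by
  have h1 : 1 - t ≠ 0 := sub_ne_zero.mpr ht.symm
  have h2 : z - t ≠ 0 := sub_ne_zero.mpr hzt
  have h3 : 1 - z ≠ 0 := sub_ne_zero.mpr (Ne.symm hz)
  simp only [principalPart, Fin.sum_univ_three, Fin.isValue, Matrix.cons_val_zero,
    Matrix.cons_val_one, Matrix.cons_val, Fin.coe_ofNat_eq_mod, Nat.zero_mod, Nat.one_mod,
    Nat.mod_succ, zero_add, pow_one, Nat.reduceAdd]
  field_simp
  ring

/-- **Molien formula for the Hilbert series of the dP₀ master space.**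
For `t ∈ ℂ` and `r ∈ ℝ` with `|t| < r < 1`,
`(1/(2πi)) ∮_{|z|=r} z²/((z−t)³(1−z)³) dz = (1+4t+t²)/(1−t)⁵`. -/
theorem molien_integral_dP0 (t : ℂ) (r : ℝ)
    (h₁ : ‖t‖ < r) (h₂ : r < 1) :
    (2 * Real.pi * Complex.I)⁻¹ *
        (∮ z in C(0, r), z ^ 2 / ((z - t) ^ 3 * (1 - z) ^ 3))
      = (1 + 4 * t + t ^ 2) / (1 - t) ^ 5 := by
  have hr : 0 < r := (norm_nonneg t).trans_lt h₁
  have ht : t ∈ ball (0 : ℂ) r := mem_ball_zero_iff.mpr h₁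
  have h1 : (1 : ℂ) ∉ closedBall 0 r := by simpa using h₂
  have ht1 : t ≠ 1 := ne_of_mem_of_not_mem (ball_subset_closedBall ht) h1
  have hts : t ∉ sphere (0 : ℂ) r := fun h ↦ sphere_disjoint_ball.ne_of_mem h ht rfl
  have h1s : (1 : ℂ) ∉ sphere (0 : ℂ) r := fun h ↦ h1 (sphere_subset_closedBall h)
  rw [circleIntegral.integral_congr hr.le fun z hz ↦
      molien_dP0_integrand_eq_principalPart_add ht1 (ne_of_mem_of_not_mem hz hts)
        (ne_of_mem_of_not_mem hz h1s),
    circleIntegral.integral_add (circleIntegrable_principalPart _ hr.le hts)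
      (circleIntegrable_principalPart _ hr.le h1s),
    circleIntegral_principalPart_of_mem_ball _ ht,
    circleIntegral_principalPart_of_notMem_closedBall _ hr.le h1, add_zero,
    ← mul_assoc, inv_mul_cancel₀ two_pi_I_ne_zero, one_mul, Matrix.cons_val_zero]
end

section
/- Let b₁, b₂, b₃ > 0 be real numbers with b₁ ≠ b₃ and b₂ ≠ b₃. Define the refined Hilbert series of the conifold H(t₁,t₂,t₃) = t₁t₂(1−t₃)/((1−t₁)(1−t₂)(t₁−t₃)(t₂−t₃)) and set G(q) = H(e^{−b₁q}, e^{−b₂q}, e^{−b₃q}) for q > 0. Then as q → 0⁺, q³·G(q) tends to b₃/(b₁(b₁−b₃)(b₂² − b₂b₃)) = b₃/(b₁b₂(b₁−b₃)(b₂−b₃)). (This identifies the leading Laurent coefficient V₃ of the conifold Hilbert series as a function of the Reeb vector, in agreement with the volume function of the conifold's Sasaki–Einstein horizon.) -/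
/-!
After multiplying numerator and denominator by suitable powers of `q`, `q³ G(q)` becomes
`t₁ t₂ · ((1 - t₃)/q) / (((1 - t₁)/q) ((1 - t₂)/q) ((t₁ - t₃)/q) ((t₂ - t₃)/q))` with
`tᵢ = e^{-bᵢ q}`. Every difference quotient `(e^{-a q} - e^{-b q})/q` tends to the derivative
`b - a` at `0`, so the limit is `b₃ / (b₁ b₂ (b₃ - b₁)(b₃ - b₂))`.
-/

open Filter Topology Real

lemma tendsto_exp_neg_mul_sub_exp_neg_mul_div (a b : ℝ) :
    Tendsto (fun q => (exp (-a * q) - exp (-b * q)) / q) (𝓝[≠] 0) (𝓝 (b - a)) := by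
  have hderiv : HasDerivAt (fun q => exp (-a * q) - exp (-b * q)) (b - a) 0 := by
    have ha := ((hasDerivAt_id' (0 : ℝ)).const_mul (-a)).exp
    have hb := ((hasDerivAt_id' (0 : ℝ)).const_mul (-b)).exp
    exact (ha.sub hb).congr_deriv (by simp; ring)
  refine hderiv.tendsto_slope_zero.congr fun q => ?_
  simp [div_eq_inv_mul]

lemma tendsto_one_sub_exp_neg_mul_div (b : ℝ) :
    Tendsto (fun q => (1 - exp (-b * q)) / q) (𝓝[≠] 0) (𝓝 b) := by
  simpa using tendsto_exp_neg_mul_sub_exp_neg_mul_div 0 b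

/-- Holds for every `q` and every `tᵢ`: degenerate cases are `0 = 0` since `x / 0 = 0`. -/
lemma pow_three_mul_conifold_eq (t₁ t₂ t₃ q : ℝ) :
    q ^ 3 * (t₁ * t₂ * (1 - t₃) / ((1 - t₁) * (1 - t₂) * (t₁ - t₃) * (t₂ - t₃))) =
      t₁ * t₂ * ((1 - t₃) / q) /
        ((1 - t₁) / q * ((1 - t₂) / q) * ((t₁ - t₃) / q) * ((t₂ - t₃) / q)) := by
  rcases eq_or_ne q 0 with rfl | hq
  · simp
  · field_simp

theorem reeb_leading_coefficient_conifold_general (b₁ b₂ b₃ : ℝ)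
    (h₁ : 0 < b₁) (h₂ : 0 < b₂)
    (h₁₃ : b₁ ≠ b₃) (h₂₃ : b₂ ≠ b₃)
    (H : ℝ → ℝ → ℝ → ℝ)
    (hH : ∀ t₁ t₂ t₃ : ℝ, H t₁ t₂ t₃ =
      t₁ * t₂ * (1 - t₃) / ((1 - t₁) * (1 - t₂) * (t₁ - t₃) * (t₂ - t₃)))
    (G : ℝ → ℝ)
    (hG : ∀ q : ℝ, G q =
      H (Real.exp (-b₁ * q)) (Real.exp (-b₂ * q)) (Real.exp (-b₃ * q))) :
    b₃ / (b₁ * (b₁ - b₃) * (b₂ ^ 2 - b₂ * b₃))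
        = b₃ / (b₁ * b₂ * (b₁ - b₃) * (b₂ - b₃)) ∧
      Tendsto (fun q : ℝ => q ^ 3 * G q) (𝓝[>] 0)
        (𝓝 (b₃ / (b₁ * b₂ * (b₁ - b₃) * (b₂ - b₃)))) := by
  refine ⟨by ring_nf, ?_⟩
  have hexp (b : ℝ) : Tendsto (fun q => exp (-b * q)) (𝓝[>] 0) (𝓝 1) :=
    tendsto_nhdsWithin_of_tendsto_nhds <| by
      simpa using ((continuous_const_mul (-b)).rexp.tendsto 0)
  have hquot (b : ℝ) := (tendsto_one_sub_exp_neg_mul_div b).mono_left (nhdsGT_le_nhdsNE 0)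
  have hquot' (a b : ℝ) :=
    (tendsto_exp_neg_mul_sub_exp_neg_mul_div a b).mono_left (nhdsGT_le_nhdsNE 0)
  have hden : b₁ * b₂ * (b₃ - b₁) * (b₃ - b₂) ≠ 0 := by
    have := sub_ne_zero.2 h₁₃.symm
    have := sub_ne_zero.2 h₂₃.symm
    positivity
  have hlim := (((hexp b₁).mul (hexp b₂)).mul (hquot b₃)).div
    ((((hquot b₁).mul (hquot b₂)).mul (hquot' b₁ b₃)).mul (hquot' b₂ b₃)) hden
  convert hlim using 2
  · simp only [hG, hH, pow_three_mul_conifold_eq, Pi.div_apply]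
  · field_simp
    ring

/-- For positive reals `b₁, b₂, b₃` with `b₁ ≠ b₃` and `b₂ ≠ b₃`,
let `H(t₁,t₂,t₃) = t₁t₂(1−t₃)/((1−t₁)(1−t₂)(t₁−t₃)(t₂−t₃))` be the refined Hilbert
series of the conifold, and set `G(q) = H(e^{−b₁q}, e^{−b₂q}, e^{−b₃q})` for
`q > 0`.  Then, as `q → 0⁺`,
`q³·G(q) → b₃/(b₁(b₁−b₃)(b₂²−b₂b₃)) = b₃/(b₁b₂(b₁−b₃)(b₂−b₃))`. -/
theorem reeb_leading_coefficient_conifold (b₁ b₂ b₃ : ℝ)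
    (h₁ : 0 < b₁) (h₂ : 0 < b₂) (h₃ : 0 < b₃)
    (h₁₃ : b₁ ≠ b₃) (h₂₃ : b₂ ≠ b₃)
    (H : ℝ → ℝ → ℝ → ℝ)
    (hH : ∀ t₁ t₂ t₃ : ℝ, H t₁ t₂ t₃ =
      t₁ * t₂ * (1 - t₃) / ((1 - t₁) * (1 - t₂) * (t₁ - t₃) * (t₂ - t₃)))
    (G : ℝ → ℝ)
    (hG : ∀ q : ℝ, G q =
      H (Real.exp (-b₁ * q)) (Real.exp (-b₂ * q)) (Real.exp (-b₃ * q))) :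
    b₃ / (b₁ * (b₁ - b₃) * (b₂ ^ 2 - b₂ * b₃))
        = b₃ / (b₁ * b₂ * (b₁ - b₃) * (b₂ - b₃)) ∧
      Tendsto (fun q : ℝ => q ^ 3 * G q) (𝓝[>] 0)
        (𝓝 (b₃ / (b₁ * b₂ * (b₁ - b₃) * (b₂ - b₃)))) :=
  reeb_leading_coefficient_conifold_general b₁ b₂ b₃ h₁ h₂ h₁₃ h₂₃ H hH G hG
end
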